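/- arXiv:2512.18136 — 2 statements merged into one kernel-verified Lean document; each statement's English description precedes it below -/
import Mathlib

section
/- Let k ≥ 1 and e ≥ k + 4 with 2k ≤ e. The symmetric semigroup S_k = ⟨e, e+1, ..., e+k-1, e+2k, e+2k+1, ..., 2e-1⟩ has Frobenius number 2e + 2k - 1 and genus e + k. -/
/-- The set of gaps of a numerical semigroup (submonoid of ℕ). -/
def gapsOf (S : AddSubmonoid ℕ) : Set ℕ := {n | n ∉ S}

/-- The Frobenius number: the largest gap. -/
noncomputable def frobeniusNumber (S : AddSubmonoid ℕ) : ℕ := sSup (gapsOf S)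

/-- The genus: the number of gaps. -/
noncomputable def genusOf (S : AddSubmonoid ℕ) : ℕ := Nat.card (gapsOf S)

/-- A numerical semigroup is symmetric iff 2g = F + 1. -/
def IsSymmetricNS (S : AddSubmonoid ℕ) : Prop :=
  2 * genusOf S = frobeniusNumber S + 1

/-- The Sally type semigroup `S_k^e(j) = ⟨e,…,e+j-1, e+j+k,…,2e-1⟩`. -/
def sally (e k j : ℕ) : AddSubmonoid ℕ :=
  AddSubmonoid.closure (Set.Ico e (e + j) ∪ Set.Ico (e + j + k) (2 * e))

lemma mem_gen {e k n : ℕ}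
    (h : (e ≤ n ∧ n < e + k) ∨ (e + k + k ≤ n ∧ n < 2 * e)) : n ∈ sally e k k := by
  apply AddSubmonoid.subset_closure
  rcases h with h | h
  · exact Or.inl (Set.mem_Ico.mpr h)
  · exact Or.inr (Set.mem_Ico.mpr h)

lemma twoA1 {e k : ℕ} (hk : 1 ≤ k) {n : ℕ} (h1 : 2 * e ≤ n) (h2 : n ≤ 2 * e + 2 * k - 2) :
    n ∈ sally e k k := by
  rcases le_or_gt (n - 2 * e) (k - 1) with hm | hm
  · have h : n = (n - e) + e := by omega
    rw [h]
    exact add_mem (mem_gen (Or.inl ⟨by omega, by omega⟩)) (mem_gen (Or.inl ⟨by omega, by omega⟩))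
  · have h : n = (e + k - 1) + (n - (e + k - 1)) := by omega
    rw [h]
    exact add_mem (mem_gen (Or.inl ⟨by omega, by omega⟩)) (mem_gen (Or.inl ⟨by omega, by omega⟩))

lemma bigmem {e k : ℕ} (hk : 1 ≤ k) (he : k + 4 ≤ e) (hke : 2 * k ≤ e) :
    ∀ n, 2 * e + 2 * k ≤ n → n ∈ sally e k k := by
  intro n
  induction n using Nat.strong_induction_on with
  | _ n ih =>
    intro hn
    by_cases h3 : 3 * e + 2 * k ≤ n
    · have h : n = e + (n - e) := by omega
      rw [h]
      exact add_mem (mem_gen (Or.inl ⟨le_refl e, by omega⟩)) (ih (n - e) (by omega) (by omega))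
    · push_neg at h3
      by_cases hA : n ≤ 3 * e - 1
      · -- A1 + A2; here 2k ≤ e - 1
        by_cases hm : n - (2 * e + 2 * k) ≤ k - 1
        · have h : n = (n - (e + 2 * k)) + (e + k + k) := by omega
          rw [h]
          exact add_mem (mem_gen (Or.inl ⟨by omega, by omega⟩))
            (mem_gen (Or.inr ⟨by omega, by omega⟩))
        · have h : n = (e + k - 1) + (n - (e + k - 1)) := by omega
          rw [h]
          exact add_mem (mem_gen (Or.inl ⟨by omega, by omega⟩))
            (mem_gen (Or.inr ⟨by omega, by omega⟩))
      · push_neg at hA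
        by_cases hB : n ≤ 3 * e + 2 * k - 2
        · have h : n = e + (n - e) := by omega
          rw [h]
          exact add_mem (mem_gen (Or.inl ⟨le_refl e, by omega⟩))
            (twoA1 hk (by omega) (by omega))
        · -- n = 3e + 2k - 1
          rcases le_or_gt 2 k with hk2 | hk2
          · have h : n = (e + k - 1) + (n - (e + k - 1)) := by omega
            rw [h]
            exact add_mem (mem_gen (Or.inl ⟨by omega, by omega⟩))
              (twoA1 hk (by omega) (by omega))
          · -- k = 1, n = 3e + 1 = (e+3) + (2e-2)
            have h : n = (e + 3) + (n - (e + 3)) := by omega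
            rw [h]
            exact add_mem (mem_gen (Or.inr ⟨by omega, by omega⟩))
              (mem_gen (Or.inr ⟨by omega, by omega⟩))

lemma mem_sally_iff {e k : ℕ} (hk : 1 ≤ k) (he : k + 4 ≤ e) (hke : 2 * k ≤ e) (n : ℕ) :
    n ∈ sally e k k ↔
      (n = 0 ∨ (e ≤ n ∧ n < e + k) ∨ (e + 2 * k ≤ n ∧ n ≠ 2 * e + 2 * k - 1)) := by
  constructor
  · intro hn
    let T : AddSubmonoid ℕ :=
      { carrier := {m | m = 0 ∨ (e ≤ m ∧ m < e + k) ∨ (e + 2 * k ≤ m ∧ m ≠ 2 * e + 2 * k - 1)}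
        zero_mem' := Or.inl rfl
        add_mem' := fun ha hb => by
          simp only [Set.mem_setOf_eq] at *; omega }
    have hsub : sally e k k ≤ T := by
      rw [sally, AddSubmonoid.closure_le]
      rintro x (hx | hx) <;> simp only [Set.mem_Ico] at hx <;>
        simp only [T, AddSubmonoid.mem_mk, AddSubsemigroup.mem_mk, Set.mem_setOf_eq,
          Finset.coe_sort_coe] <;>
      · show x = 0 ∨ _ ∨ _
        omega
    have := hsub hn
    simpa [T, AddSubmonoid.mem_mk] using this
  · rintro (rfl | h | h)
    · exact zero_mem _
    · exact mem_gen (Or.inl h)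
    · rcases lt_or_ge n (2 * e) with h2 | h2
      · exact mem_gen (Or.inr ⟨by omega, h2⟩)
      · rcases le_or_gt (2 * e + 2 * k) n with h3 | h3
        · exact bigmem hk he hke n h3
        · exact twoA1 hk h2 (by omega)

theorem sally_k_k_frobenius_genus (e k : ℕ) (hk : 1 ≤ k) (he : k + 4 ≤ e)
    (hke : 2 * k ≤ e) :
    frobeniusNumber (sally e k k) = 2 * e + 2 * k - 1 ∧
    genusOf (sally e k k) = e + k := by
  have hmem := mem_sally_iff hk he hke
  have hgaps : gapsOf (sally e k k) =
      ↑(Finset.Ico 1 e ∪ Finset.Ico (e + k) (e + 2 * k) ∪ {2 * e + 2 * k - 1}) := by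
    ext n
    simp only [gapsOf, Set.mem_setOf_eq, hmem, Finset.coe_union, Set.mem_union,
      Finset.mem_coe, Finset.mem_Ico, Finset.coe_singleton, Set.mem_singleton_iff]
    omega
  constructor
  · rw [frobeniusNumber, hgaps]
    apply le_antisymm
    · apply csSup_le ⟨2 * e + 2 * k - 1, by simp⟩
      intro b hb
      simp only [Finset.coe_union, Set.mem_union, Finset.mem_coe, Finset.mem_Ico,
        Finset.coe_singleton, Set.mem_singleton_iff] at hb
      omega
    · exact le_csSup (Finset.bddAbove _) (by simp)
  · rw [genusOf, hgaps, Nat.card_coe_set_eq, Set.ncard_coe_finset]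
    rw [Finset.card_union_of_disjoint, Finset.card_union_of_disjoint]
    · simp only [Nat.card_Ico, Finset.card_singleton]
      omega
    · simp only [Finset.disjoint_left, Finset.mem_Ico, Finset.mem_singleton]
      intro a ha; omega
    · simp only [Finset.disjoint_left, Finset.mem_union, Finset.mem_Ico, Finset.mem_singleton]
      intro a ha; omega
end

section
/- Let e, k, j, n be positive integers with n ≥ 2, j ≥ 2, j + k ≤ e - 1, 2k > e, satisfying (n-1)(e-2) + (n-1)j < nk ≤ (n-1)e + nj - (2n-1) (so that S_k^e(j) has Frobenius number ne+nj+nk-1 and genus n²k - n(n-1)j - (n-1)²e + (n-1)(2n-1) + e - 1). Then S_k^e(j) is not symmetric. -/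
open Finset

theorem frobeniusNumber_eq_of_forall_lt_mem {S : AddSubmonoid ℕ} {F : ℕ} (hF : F ∉ S)
    (hS : ∀ x, F < x → x ∈ S) : frobeniusNumber S = F :=
  IsGreatest.csSup_eq ⟨hF, fun _ hx => not_lt.1 fun h => hx (hS _ h)⟩

theorem genusOf_eq_card_filter {S : AddSubmonoid ℕ} {F : ℕ} [DecidablePred (· ∈ S)]
    (hS : ∀ x, F < x → x ∈ S) : genusOf S = #{x ∈ range (F + 1) | x ∉ S} := by
  rw [genusOf, Nat.card_coe_set_eq, ← Set.ncard_coe_finset]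
  congr 1
  ext x
  simp only [gapsOf, Set.mem_ofPred_eq, coe_filter, mem_range]
  exact ⟨fun hx => ⟨Nat.lt_succ_of_le (not_lt.1 fun h => hx (hS x h)), hx⟩, And.right⟩

theorem not_isSymmetricNS_of_gap_pair {S : AddSubmonoid ℕ} {F g : ℕ} (hF : F ∉ S)
    (hS : ∀ x, F < x → x ∈ S) (hg : g ∉ S) (hFg : F - g ∉ S) : ¬ IsSymmetricNS S := by
  classical
  rw [IsSymmetricNS, genusOf_eq_card_filter hS, frobeniusNumber_eq_of_forall_lt_mem hF hS]
  have hgF : g ≤ F := not_lt.1 fun h => hg (hS g h)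
  set elts := {x ∈ range (F + 1) | x ∈ S}
  set gaps := {x ∈ range (F + 1) | x ∉ S}
  have hsum : #elts + #gaps = F + 1 := by
    rw [card_filter_add_card_filter_not, card_range]
  have hg_mem : g ∈ gaps := mem_filter.2 ⟨mem_range.2 (by omega), hg⟩
  have hlt : #elts < #gaps := by
    refine lt_of_le_of_lt (card_le_card_of_injOn (fun x => F - x) ?_ ?_)
      (card_erase_lt_of_mem hg_mem)
    · intro x hx
      simp only [elts, coe_filter, mem_range, Set.mem_ofPred_eq] at hx
      simp only [gaps, coe_erase, coe_filter, mem_range, Set.mem_sdiff, Set.mem_ofPred_eq,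
        Set.mem_singleton_iff]
      refine ⟨⟨by omega, fun hFx => hF ?_⟩, fun hgx => hFg ?_⟩
      · simpa [Nat.add_sub_cancel' (Nat.lt_succ_iff.1 hx.1)] using add_mem hx.2 hFx
      · rw [← hgx, Nat.sub_sub_self (Nat.lt_succ_iff.1 hx.1)]; exact hx.2
    · intro x hx y hy hxy
      simp only [elts, coe_filter, mem_range, Set.mem_ofPred_eq] at hx hy hxy
      omega
  omega

theorem eq_zero_or_le_of_mem_closure {s : Set ℕ} {m x : ℕ} (hs : ∀ y ∈ s, m ≤ y)
    (hx : x ∈ AddSubmonoid.closure s) : x = 0 ∨ m ≤ x := by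
  induction hx using AddSubmonoid.closure_induction with
  | mem y hy => exact .inr (hs y hy)
  | zero => exact .inl rfl
  | add y z _ _ hy hz => omega

theorem mem_of_Ico_subset_of_le {S : AddSubmonoid ℕ} {m N x : ℕ} (hm : m ∈ S) (hm0 : 0 < m)
    (hN : Set.Ico N (N + m) ⊆ S) (hx : N ≤ x) : x ∈ S := by
  induction x using Nat.strong_induction_on with
  | _ x ih =>
    by_cases hxm : x < N + m
    · exact hN ⟨hx, hxm⟩
    · rw [← Nat.sub_add_cancel (show m ≤ x by omega)]
      exact add_mem (ih (x - m) (by omega) (by omega)) hm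

theorem mem_closure_Icc_iff {u v x : ℕ} (huv : u ≤ v) :
    x ∈ AddSubmonoid.closure (Set.Icc u v) ↔ ∃ a, a * u ≤ x ∧ x ≤ a * v := by
  constructor
  · intro hx
    induction hx using AddSubmonoid.closure_induction with
    | mem y hy => exact ⟨1, by simpa using hy⟩
    | zero => exact ⟨0, by simp⟩
    | add y z _ _ hy hz =>
      obtain ⟨a, hay⟩ := hy
      obtain ⟨b, hbz⟩ := hz
      exact ⟨a + b, by rw [add_mul, add_mul]; omega⟩
  · rintro ⟨a, hau, hav⟩
    induction a generalizing x with
    | zero => simp_all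
    | succ a ih =>
      rw [add_one_mul] at hau hav
      have := Nat.mul_le_mul_left a huv
      rw [← Nat.sub_add_cancel (show max u (x - a * v) ≤ x by omega)]
      exact add_mem (ih (by omega) (by omega))
        (AddSubmonoid.subset_closure ⟨by omega, by omega⟩)

theorem mem_closure_Icc_union_Icc_iff {u₁ v₁ u₂ v₂ x : ℕ} (h₁ : u₁ ≤ v₁) (h₂ : u₂ ≤ v₂) :
    x ∈ AddSubmonoid.closure (Set.Icc u₁ v₁ ∪ Set.Icc u₂ v₂) ↔
      ∃ a b, a * u₁ + b * u₂ ≤ x ∧ x ≤ a * v₁ + b * v₂ := by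
  simp only [AddSubmonoid.closure_union, AddSubmonoid.mem_sup, mem_closure_Icc_iff h₁,
    mem_closure_Icc_iff h₂]
  constructor
  · rintro ⟨y, ⟨a, hay⟩, z, ⟨b, hbz⟩, rfl⟩
    exact ⟨a, b, by omega, by omega⟩
  · rintro ⟨a, b, hlo, hhi⟩
    have := Nat.mul_le_mul_left a h₁
    have := Nat.mul_le_mul_left b h₂
    exact ⟨max (a * u₁) (x - b * v₂), ⟨a, by omega, by omega⟩,
      x - max (a * u₁) (x - b * v₂), ⟨b, by omega, by omega⟩, by omega⟩

theorem exists_mem_Icc_of_chain {lo hi : ℕ → ℕ} {n x : ℕ}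
    (hchain : ∀ i < n, lo (i + 1) ≤ hi i + 1) (hlo : lo 0 ≤ x) (hhi : x ≤ hi n) :
    ∃ i ≤ n, x ∈ Set.Icc (lo i) (hi i) := by
  induction n with
  | zero => exact ⟨0, le_rfl, hlo, hhi⟩
  | succ n ih =>
    by_cases hx : x ≤ hi n
    · obtain ⟨i, hin, hxi⟩ := ih (fun i hi => hchain i (by omega)) hx
      exact ⟨i, by omega, hxi⟩
    · exact ⟨n + 1, le_rfl, by have := hchain n (by omega); omega, hhi⟩

theorem sally_eq_closure_Icc {e k j : ℕ} (he : 0 < e) :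
    sally e k j =
      AddSubmonoid.closure (Set.Icc e (e + j - 1) ∪ Set.Icc (e + j + k) (2 * e - 1)) := by
  rw [sally, Set.Icc_sub_one_right_eq_Ico_of_not_isMin (by simp; omega),
    Set.Icc_sub_one_right_eq_Ico_of_not_isMin (by simp; omega)]

theorem mem_sally_iff_s14 {e k j x : ℕ} (hj : 0 < j) (hjk : j + k < e) :
    x ∈ sally e k j ↔
      ∃ a b, a * e + b * (e + j + k) ≤ x ∧ x ≤ a * (e + j - 1) + b * (2 * e - 1) := by
  rw [sally_eq_closure_Icc (by omega : 0 < e), mem_closure_Icc_union_Icc_iff (by omega) (by omega)]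

theorem sally_eq_zero_or_le {e k j x : ℕ} (hx : x ∈ sally e k j) : x = 0 ∨ e ≤ x :=
  eq_zero_or_le_of_mem_closure (by rintro y (hy | hy) <;> exact le_trans (by omega) hy.1) hx

/-- Write `n(e+j+k) - c` as a sum of `a` generators from `[e, e+j)` and `b` from `[e+j+k, 2e)`.
The lower bound forces `a ≤ 2(n - b) - 1`. For `a ≤ 2(n - b) - 2` the largest such sum falls
short of the target by `h1`; for `a = 2(n - b) - 1` it still does when `c = 1`, while the
smallest one exceeds the target when `c > j + k`. -/
theorem sally_sub_not_mem {e k j n c : ℕ} (hj : 0 < j) (hjk : j + k < e)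
    (h1 : (n - 1) * (e - 2) + (n - 1) * j < n * k) (hc : c = 1 ∨ j + k < c ∧ c ≤ e + j) :
    n * (e + j + k) - c ∉ sally e k j := by
  intro hx
  obtain ⟨a, b, hlo, hhi⟩ := (mem_sally_iff_s14 hj hjk).1 hx
  have hn : 0 < n := Nat.pos_of_ne_zero fun h => by simp [h] at h1
  have hcN : c ≤ n * (e + j + k) := le_trans (by omega) (Nat.le_mul_of_pos_left _ hn)
  have hbn : b < n := Nat.lt_of_mul_lt_mul_right (a := e + j + k) (by omega)
  zify [show 2 ≤ e by omega, show 1 ≤ e + j by omega, show 1 ≤ 2 * e by omega,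
    Nat.one_le_iff_ne_zero.2 hn.ne', hcN] at h1 hlo hhi
  have hc1 : (1 : ℤ) ≤ c := by omega
  obtain ⟨d, rfl⟩ : ∃ d, n = b + d := ⟨n - b, by omega⟩
  push_cast at h1 hlo hhi
  have hL : (a : ℤ) * e + c ≤ d * (e + j + k) := by linarith
  have hU : (d : ℤ) * (e + j + k) ≤ a * (e + j - 1) + b * (e - 1 - j - k) + c := by linarith
  have H : (b + d : ℤ) * (e + j - k - 2) < e + j - 2 := by linarith
  have ha : a < 2 * d := by
    refine Nat.lt_of_mul_lt_mul_right (a := e) ?_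
    zify
    linarith [mul_le_mul_of_nonneg_left (show (j + k + 1 : ℤ) ≤ e by omega) d.cast_nonneg]
  have hce : (c : ℤ) ≤ e + j := by omega
  have hbj : (0 : ℤ) ≤ b * (2 * j - 1) := mul_nonneg (by positivity) (by omega)
  obtain ha | ha : (a : ℤ) ≤ 2 * d - 2 ∨ (a : ℤ) = 2 * d - 1 := by omega
  · linarith [mul_le_mul_of_nonneg_right ha (by omega : (0 : ℤ) ≤ e + j - 1)]
  · rw [ha] at hL hU
    rcases hc with rfl | ⟨hjkc, -⟩
    · push_cast at hU
      linarith
    · linarith [mul_nonneg (by omega : (0 : ℤ) ≤ d - 1) (by omega : (0 : ℤ) ≤ e - j - k)]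

theorem sally_mem_of_le {e k j n x : ℕ} (hj : 0 < j) (hjk : j + k < e)
    (hn : n * (e + j + k) + e ≤ 2 * n * (e + j - 1) + 1) (hx : n * (e + j + k) ≤ x) :
    x ∈ sally e k j := by
  have he : e ∈ sally e k j := AddSubmonoid.subset_closure (.inl ⟨le_rfl, by omega⟩)
  refine mem_of_Ico_subset_of_le he (by omega) (fun y hy => ?_) hx
  have hchain : ∀ i < n, 2 * (i + 1) * e + (n - (i + 1)) * (e + j + k) ≤
      2 * i * (e + j - 1) + (n - i) * (2 * e - 1) + 1 := by
    intro i hi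
    obtain ⟨m, rfl⟩ : ∃ m, n = i + 1 + m := ⟨n - (i + 1), by omega⟩
    obtain ⟨f, rfl⟩ : ∃ f, e = f + 1 := ⟨e - 1, by omega⟩
    simp only [show i + 1 + m - (i + 1) = m by omega, show i + 1 + m - i = m + 1 by omega,
      show f + 1 + j - 1 = f + j by omega, show 2 * (f + 1) - 1 = 2 * f + 1 by omega]
    linarith [Nat.mul_le_mul_left m (show j + k + 1 ≤ f + 1 by omega),
      Nat.le_mul_of_pos_right i hj]
  obtain ⟨i, -, hyi⟩ := exists_mem_Icc_of_chain
    (lo := fun i => 2 * i * e + (n - i) * (e + j + k))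
    (hi := fun i => 2 * i * (e + j - 1) + (n - i) * (2 * e - 1)) hchain
    (by simpa using hy.1) (by simp; have := hy.2; omega)
  exact (mem_sally_iff_s14 hj hjk).2 ⟨2 * i, n - i, hyi⟩

theorem sally_not_symmetric_odd_level_general (e k j n : ℕ) (hj : 2 ≤ j) (hjk : j + k ≤ e - 1)
    (h1 : (n - 1) * (e - 2) + (n - 1) * j < n * k)
    (h2 : n * k ≤ (n - 1) * e + n * j - (2 * n - 1)) :
    ¬ IsSymmetricNS (sally e k j) := by
  have hj0 : 0 < j := by omega
  have hjk' : j + k < e := by omega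
  have hn0 : 0 < n := Nat.pos_of_ne_zero fun h => by simp [h] at h1
  have hcover : n * (e + j + k) + e ≤ 2 * n * (e + j - 1) + 1 := by
    have h3 : 2 * n - 1 ≤ (n - 1) * e + n * j := by
      have := Nat.mul_le_mul_left (n - 1) (show 2 ≤ e by omega)
      have := Nat.le_mul_of_pos_right n hj0
      omega
    zify [show 1 ≤ n by omega, show 1 ≤ 2 * n by omega, show 1 ≤ e + j by omega, h3] at h2 ⊢
    linarith
  have hN : e ≤ n * (e + j + k) := le_trans (by omega) (Nat.le_mul_of_pos_left _ hn0)
  refine not_isSymmetricNS_of_gap_pair (F := n * (e + j + k) - 1) (g := e - 1)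
    (sally_sub_not_mem hj0 hjk' h1 (.inl rfl))
    (fun x hx => sally_mem_of_le hj0 hjk' hcover (by omega)) ?_ ?_
  · intro hmem
    have := sally_eq_zero_or_le hmem
    omega
  · rw [Nat.sub_sub_sub_cancel_right (by omega)]
    exact sally_sub_not_mem hj0 hjk' h1 (.inr ⟨by omega, by omega⟩)

theorem sally_not_symmetric_odd_level (e k j n : ℕ) (hn : 2 ≤ n) (hj : 2 ≤ j)
    (hk : 0 < k) (he : 0 < e) (hjk : j + k ≤ e - 1) (h2k : e < 2 * k)
    (h1 : (n - 1) * (e - 2) + (n - 1) * j < n * k)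
    (h2 : n * k ≤ (n - 1) * e + n * j - (2 * n - 1)) :
    ¬ IsSymmetricNS (sally e k j) :=
  sally_not_symmetric_odd_level_general e k j n hj hjk h1 h2
end
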